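/- X³₁, the set of points Σ δₙ ∏_{j≤n} ξⱼ over alternating sequences with first nonzero digit 1 (with ξⱼ depending on (δₙ) by conjugating after each nonzero digit), is a closed subset of ℂ. -/

import Mathlib

open Complex

/-- e^{iθ} -/
noncomputable def rot (θ : ℝ) : ℂ := Complex.exp (θ * Complex.I)

/-- The digit set Δ_θ = {0, 1, e^{iθ}, …, e^{(p-1)iθ}}. -/
def Delta (θ : ℝ) (p : ℕ) : Set ℂ := insert 0 {z | ∃ k, k < p ∧ z = rot θ ^ k}

open scoped Classical in
/-- N_j : the number of nonzero digits among positions 1,…,j. -/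
noncomputable def Ncount (δ : ℕ → ℂ) (j : ℕ) : ℕ :=
  ((Finset.Icc 1 j).filter (fun m => δ m ≠ 0)).card

/-- Alternating Condition: each nonzero digit equals e^{+iθ} times the previous nonzero
digit δ_{j₀} if the count N_{j₀} of nonzero digits up to j₀ is odd, and e^{-iθ} times it
if N_{j₀} is even. Sequences are indexed from 1; index 0 is a dummy (digit 0). -/
def AC (θ : ℝ) (δ : ℕ → ℂ) : Prop :=
  ∀ j k : ℕ, j < k → δ j ≠ 0 → δ k ≠ 0 → (∀ m, j < m → m < k → δ m = 0) →
    δ k = (if Odd (Ncount δ j) then rot θ else (rot θ)⁻¹) * δ j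

/-- Membership in W^A_θ (with the convention δ 0 = 0, i.e. sequences start at index 1). -/
def Walt (θ : ℝ) (p : ℕ) (δ : ℕ → ℂ) : Prop :=
  δ 0 = 0 ∧ (∀ n, δ n ∈ Delta θ p) ∧ AC θ δ

/-- The first nonzero digit of δ is c (or δ is identically zero). -/
def FirstNonzero (δ : ℕ → ℂ) (c : ℂ) : Prop :=
  (∀ n, δ n = 0) ∨ ∃ j, δ j = c ∧ ∀ m, m < j → δ m = 0

/-- The weights ξ: ξ₁ = α and ξ_{j+1} = ξ_j if δ_j = 0, conj ξ_j otherwise. -/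
noncomputable def xi (α : ℂ) (δ : ℕ → ℂ) : ℕ → ℂ
  | 0 => α
  | j + 1 => if δ j = 0 then xi α δ j else starRingEnd ℂ (xi α δ j)

/-- X³₁ : points from alternating sequences with first nonzero digit 1. -/
noncomputable def X3one (α : ℂ) (θ : ℝ) (p : ℕ) : Set ℂ :=
  {x | ∃ δ : ℕ → ℂ, Walt θ p δ ∧ FirstNonzero δ 1 ∧
    x = ∑' n, δ n * ∏ j ∈ Finset.Icc 1 n, xi α δ j}

/-- X³_{α,θ} : points from all alternating sequences. -/
noncomputable def X3full (α : ℂ) (θ : ℝ) (p : ℕ) : Set ℂ :=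
  {x | ∃ δ : ℕ → ℂ, Walt θ p δ ∧
    x = ∑' n, δ n * ∏ j ∈ Finset.Icc 1 n, xi α δ j}

/-!
Digit sequences with digits in the finite set `Δ_θ` form the compact space `ℕ → Δ_θ`. Each
condition defining `X³₁` (including "the first nonzero digit is `1`", once rephrased digit by
digit) constrains only finitely many digits at a time, so the admissible sequences form a
closed, hence compact, subset. The `n`-th term of the series depends only on the first `n + 1`
digits and is bounded by `‖α‖ ^ n`, so the sum is continuous by the Weierstrass M-test, and
`X³₁` is a continuous image of a compact set.
-/

section FiniteDependence

variable {X Y : Type*} [TopologicalSpace X] [DiscreteTopology X]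

theorem isLocallyConstant_of_forall_lt_eq {f : (ℕ → X) → Y} (n : ℕ)
    (hf : ∀ σ τ : ℕ → X, (∀ m < n, σ m = τ m) → f σ = f τ) : IsLocallyConstant f := by
  refine (IsLocallyConstant.iff_eventually_eq f).2 fun σ => ?_
  have hnear : ∀ᶠ τ in nhds σ, ∀ m ∈ Finset.range n, τ m = σ m :=
    (Finset.range n).eventually_all.2 fun m _ =>
      (continuous_apply m).continuousAt.eventually_mem ((isOpen_discrete {σ m}).mem_nhds rfl)
  filter_upwards [hnear] with τ hτ
  exact hf τ σ fun m hm => hτ m (Finset.mem_range.2 hm)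

theorem isClosed_setOf_of_forall_lt_eq {P : (ℕ → X) → Prop} (n : ℕ)
    (hP : ∀ σ τ : ℕ → X, (∀ m < n, σ m = τ m) → P σ → P τ) : IsClosed {σ | P σ} := by
  have hloc : IsLocallyConstant P := isLocallyConstant_of_forall_lt_eq n fun σ τ h =>
    propext ⟨hP σ τ h, hP τ σ fun m hm => (h m hm).symm⟩
  simpa using hloc.isClosed_fiber True

end FiniteDependence

theorem finite_Delta (θ : ℝ) (p : ℕ) : (Delta θ p).Finite := by
  refine (((Set.finite_Iio p).image fun k => rot θ ^ k).insert 0).subset ?_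
  rintro z (rfl | ⟨k, hk, rfl⟩)
  exacts [Set.mem_insert _ _, Set.mem_insert_of_mem _ ⟨k, hk, rfl⟩]

instance (θ : ℝ) (p : ℕ) : Finite (Delta θ p) := (finite_Delta θ p).to_subtype

theorem norm_le_one_of_mem_Delta {θ : ℝ} {p : ℕ} {z : ℂ} (hz : z ∈ Delta θ p) : ‖z‖ ≤ 1 := by
  rcases hz with rfl | ⟨k, -, rfl⟩
  · simp
  · simp [rot, Complex.norm_exp]

theorem norm_xi (α : ℂ) (δ : ℕ → ℂ) (j : ℕ) : ‖xi α δ j‖ = ‖α‖ := by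
  induction j with
  | zero => rfl
  | succ j ih => rw [xi]; split <;> simp [ih]

theorem xi_congr (α : ℂ) {δ δ' : ℕ → ℂ} {j : ℕ} (h : ∀ m < j, δ m = δ' m) :
    xi α δ j = xi α δ' j := by
  induction j with
  | zero => rfl
  | succ j ih => rw [xi, xi, h j j.lt_succ_self, ih fun m hm => h m (hm.trans j.lt_succ_self)]

theorem Ncount_congr {δ δ' : ℕ → ℂ} {j : ℕ} (h : ∀ m ≤ j, δ m = δ' m) :
    Ncount δ j = Ncount δ' j := by
  unfold Ncount
  congr 1
  exact Finset.filter_congr fun m hm => by rw [h m (Finset.mem_Icc.1 hm).2]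

theorem firstNonzero_iff {δ : ℕ → ℂ} {c : ℂ} (hc : c ≠ 0) :
    FirstNonzero δ c ↔ ∀ j, (∀ m < j, δ m = 0) → δ j = 0 ∨ δ j = c := by
  classical
  constructor
  · rintro (hzero | ⟨j, hj, hbefore⟩) i hi
    · exact Or.inl (hzero i)
    · rcases lt_trichotomy i j with hij | rfl | hji
      · exact Or.inl (hbefore i hij)
      · exact Or.inr hj
      · exact absurd (hj ▸ hi j hji) hc
  · intro h
    by_cases hzero : ∀ n, δ n = 0
    · exact Or.inl hzero
    push Not at hzero
    have hbefore : ∀ m < Nat.find hzero, δ m = 0 := fun m hm => not_not.1 (Nat.find_min hzero hm)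
    exact Or.inr ⟨_, (h _ hbefore).resolve_left (Nat.find_spec hzero), hbefore⟩

noncomputable def digitTerm (α : ℂ) (δ : ℕ → ℂ) (n : ℕ) : ℂ :=
  δ n * ∏ j ∈ Finset.Icc 1 n, xi α δ j

theorem norm_digitTerm_le (α : ℂ) {δ : ℕ → ℂ} {n : ℕ} (hδ : ‖δ n‖ ≤ 1) :
    ‖digitTerm α δ n‖ ≤ ‖α‖ ^ n := by
  have hprod : ‖∏ j ∈ Finset.Icc 1 n, xi α δ j‖ = ‖α‖ ^ n := by
    simp [norm_prod, norm_xi]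
  rw [digitTerm, norm_mul, hprod]
  exact mul_le_of_le_one_left (by positivity) hδ

theorem digitTerm_congr (α : ℂ) {δ δ' : ℕ → ℂ} {n : ℕ} (h : ∀ m ≤ n, δ m = δ' m) :
    digitTerm α δ n = digitTerm α δ' n := by
  unfold digitTerm
  rw [h n le_rfl]
  refine congrArg _ (Finset.prod_congr rfl fun j hj => xi_congr α fun m hm => h m ?_)
  exact hm.le.trans (Finset.mem_Icc.1 hj).2

section DiscreteDigits

variable {D : Set ℂ} [DiscreteTopology D]

theorem continuous_tsum_digitTerm {α : ℂ} (hα : ‖α‖ < 1) (hD : ∀ z ∈ D, ‖z‖ ≤ 1) :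
    Continuous fun σ : ℕ → D => ∑' n, digitTerm α (fun m => σ m) n := by
  refine continuous_tsum (fun n => ?_) (summable_geometric_of_lt_one (norm_nonneg α) hα)
    fun n σ => norm_digitTerm_le α (hD _ (σ n).2)
  refine (isLocallyConstant_of_forall_lt_eq (n + 1) fun σ τ h => ?_).continuous
  exact digitTerm_congr α fun m hm => congrArg Subtype.val (h m (Nat.lt_succ_of_le hm))

theorem isClosed_setOf_AC (θ : ℝ) : IsClosed {σ : ℕ → D | AC θ fun n => σ n} := by
  simp only [AC]
  rw [Set.ofPred_forall]
  refine isClosed_iInter fun j => ?_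
  rw [Set.ofPred_forall]
  refine isClosed_iInter fun k => isClosed_setOf_of_forall_lt_eq (k + 1) ?_
  intro σ τ hστ hσ hjk hj hk hgap
  have h : ∀ m ≤ k, (σ m : ℂ) = τ m := fun m hm => congrArg Subtype.val (hστ m (by omega))
  rw [← h k le_rfl, ← h j hjk.le, ← Ncount_congr fun m hm => h m (hm.trans hjk.le)]
  refine hσ hjk (by rwa [h j hjk.le]) (by rwa [h k le_rfl]) fun m hjm hmk => ?_
  rw [h m hmk.le]
  exact hgap m hjm hmk

theorem isClosed_setOf_firstNonzero {c : ℂ} (hc : c ≠ 0) :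
    IsClosed {σ : ℕ → D | FirstNonzero (fun n => σ n) c} := by
  simp only [firstNonzero_iff hc]
  rw [Set.ofPred_forall]
  refine isClosed_iInter fun j => isClosed_setOf_of_forall_lt_eq (j + 1) ?_
  intro σ τ hστ hσ hτ
  have h : ∀ m ≤ j, (σ m : ℂ) = τ m := fun m hm => congrArg Subtype.val (hστ m (by omega))
  rw [← h j le_rfl]
  exact hσ fun m hm => (h m hm.le).trans (hτ m hm)

end DiscreteDigits

theorem isClosed_setOf_walt (θ : ℝ) (p : ℕ) :
    IsClosed {σ : ℕ → Delta θ p | Walt θ p fun n => σ n} := by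
  have hsplit : {σ : ℕ → Delta θ p | Walt θ p fun n => σ n} =
      {σ | (σ 0 : ℂ) = 0} ∩ {σ | AC θ fun n => σ n} := by
    ext σ
    simp [Walt]
  rw [hsplit]
  exact (isClosed_setOf_of_forall_lt_eq 1 fun σ τ h h0 => h 0 one_pos ▸ h0).inter
    (isClosed_setOf_AC θ)

theorem X3one_eq_image (α : ℂ) (θ : ℝ) (p : ℕ) :
    X3one α θ p = (fun σ : ℕ → Delta θ p => ∑' n, digitTerm α (fun m => σ m) n) ''
      {σ | Walt θ p (fun n => σ n) ∧ FirstNonzero (fun n => σ n) 1} := by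
  ext x
  constructor
  · rintro ⟨δ, hW, hF, rfl⟩
    exact ⟨fun n => ⟨δ n, hW.2.1 n⟩, ⟨hW, hF⟩, rfl⟩
  · rintro ⟨σ, ⟨hW, hF⟩, rfl⟩
    exact ⟨_, hW, hF, rfl⟩

theorem X3one_isClosed_general (α : ℂ) (θ : ℝ) (p : ℕ) (hα : ‖α‖ < 1) :
    IsClosed (X3one α θ p) := by
  have hadm : IsClosed
      {σ : ℕ → Delta θ p | Walt θ p (fun n => σ n) ∧ FirstNonzero (fun n => σ n) 1} :=
    (isClosed_setOf_walt θ p).inter (isClosed_setOf_firstNonzero one_ne_zero)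
  rw [X3one_eq_image]
  exact (hadm.isCompact.image
    (continuous_tsum_digitTerm hα fun _ => norm_le_one_of_mem_Delta)).isClosed

/-- X³₁ is a closed subset of ℂ. -/
theorem X3one_isClosed (α : ℂ) (θ : ℝ) (p : ℕ) (q : ℤ) (hp : 0 < p)
    (hθ : θ = 2 * Real.pi * (q : ℝ) / (p : ℝ)) (hα : ‖α‖ < 1) :
    IsClosed (X3one α θ p) :=
  X3one_isClosed_general α θ p hα
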